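/- arXiv:1512.02296 — 6 statements merged into one kernel-verified Lean document; each statement's English description precedes it below -/
import Mathlib

section
/- Let E be a directed graph in which no cycle has an entrance. If (α,β) is a minimal cycle-free ancestry pair, then there are only finitely many minimal cycle-free ancestry pairs (γ,δ) such that there exist infinite paths z,w with (αz, βz) = (γw, δw). -/
/-- A directed graph: edges `E`, vertices `V`, range and source maps. -/
structure DirGraph where
  V : Type
  E : Type
  r : E → V
  s : E → V

/-- Shift an infinite path (sequence of edges) by `p`. -/
def shift (p : ℕ) {α : Type} (x : ℕ → α) : ℕ → α := fun i => x (i + p)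

namespace DirGraph

variable (G : DirGraph)

/-- `IsPath G v l u` : the list of edges `l` is a finite path with range `v` and
source `u` (edges are composed so that `s eᵢ = r eᵢ₊₁`). -/
inductive IsPath : G.V → List G.E → G.V → Prop
  | nil (v : G.V) : IsPath v [] v
  | cons (e : G.E) {l : List G.E} {u : G.V} :
      IsPath (G.s e) l u → IsPath (G.r e) (e :: l) u

/-- An infinite path: a sequence of edges with `s(xᵢ) = r(xᵢ₊₁)`. -/
def InfPath (x : ℕ → G.E) : Prop := ∀ i, G.s (x i) = G.r (x (i + 1))

/-- Prepend a finite path (list of edges) to an infinite path. -/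
def prepend (l : List G.E) (x : ℕ → G.E) : ℕ → G.E :=
  fun i => if h : i < l.length then l.get ⟨i, h⟩ else x (i - l.length)

/-- A cycle: a nonempty finite path with equal range and source. -/
def IsCycle (c : List G.E) : Prop := c ≠ [] ∧ ∃ u, G.IsPath u c u

/-- A finite path contains a cycle if some (contiguous) subpath is a cycle. -/
def ContainsCycle (l : List G.E) : Prop :=
  ∃ p c q, l = p ++ c ++ q ∧ G.IsCycle c

/-- A simple cycle: a cycle containing no other cycle as a proper subpath. -/
def IsSimpleCycle (c : List G.E) : Prop :=
  G.IsCycle c ∧ ∀ p c' q, c = p ++ c' ++ q → G.IsCycle c' → c' = c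

/-- A pair of finite paths is minimal if no nontrivial common final segment
can be factored out. -/
def Minimal (a b : List G.E) : Prop :=
  ∀ a' b' n, a = a' ++ n → b = b' ++ n → n = []

/-- No cycle of `G` has an entrance: for every edge `f` on a cycle, `f` is the
only edge with range `r f`. -/
def NoCycleHasEntrance : Prop :=
  ∀ u c, G.IsCycle c → G.IsPath u c u → ∀ f ∈ c, ∀ e, G.r e = G.r f → e = f

/-- Row-finite: every vertex receives only finitely many edges. -/
def RowFinite : Prop := ∀ v, {e : G.E | G.r e = v}.Finite

/-- No sources: every vertex receives an edge. -/
def NoSources : Prop := ∀ v : G.V, ∃ e, G.r e = v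

/-- Minimal cycle-free ancestry pair for the vertices `v, w`. -/
def MCFPair (v w : G.V) (a b : List G.E) : Prop :=
  (∃ u, G.IsPath v a u ∧ G.IsPath w b u) ∧ G.Minimal a b ∧
    ¬G.ContainsCycle a ∧ ¬G.ContainsCycle b

end DirGraph

namespace DirGraph
variable {G : DirGraph}

lemma prepend_lt (l : List G.E) (x : ℕ → G.E) {i : ℕ} (h : i < l.length) :
    G.prepend l x i = l[i] := dif_pos h

lemma prepend_add (l : List G.E) (x : ℕ → G.E) (n : ℕ) :
    G.prepend l x (n + l.length) = x n := by
  unfold prepend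
  rw [dif_neg (by omega)]
  congr 1
  omega

lemma infPath_segment {z : ℕ → G.E} (hz : G.InfPath z) :
    ∀ p m, G.IsPath (G.r (z m)) (List.ofFn (fun i : Fin p => z (m + i))) (G.r (z (m + p))) := by
  intro p
  induction p with
  | zero => intro m; simpa using IsPath.nil (G.r (z m))
  | succ p ih =>
    intro m
    rw [List.ofFn_succ]
    have h1 : G.IsPath (G.s (z m)) (List.ofFn fun i : Fin p => z (m + ↑(i.succ))) (G.r (z (m + (p + 1)))) := by
      rw [hz m]
      have := ih (m + 1)
      have he : (List.ofFn fun i : Fin p => z (m + 1 + ↑i)) = (List.ofFn fun i : Fin p => z (m + ↑(i.succ))) := by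
        congr 1; funext i; congr 1; simp [Fin.val_succ]; omega
      rw [he] at this
      have ht : m + 1 + p = m + (p + 1) := by omega
      rwa [ht] at this
    simpa using IsPath.cons (z m) h1

lemma segment_isCycle {z : ℕ → G.E} (hz : G.InfPath z) {M p : ℕ} (hp : 1 ≤ p)
    (hper : z (M + p) = z M) :
    G.IsCycle (List.ofFn (fun i : Fin p => z (M + i))) := by
  constructor
  · simp [List.ofFn_eq_nil_iff]; omega
  · refine ⟨G.r (z M), ?_⟩
    have := infPath_segment hz p M
    rwa [hper] at this

lemma ofFn_split {X : Type} (f : ℕ → X) (m k : ℕ) (h : m ≤ k) :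
    List.ofFn (fun i : Fin k => f i) =
      List.ofFn (fun i : Fin m => f i) ++ List.ofFn (fun i : Fin (k - m) => f (m + i)) := by
  apply List.ext_getElem (by simp; omega)
  intro i h1 h2
  simp only [List.getElem_ofFn, List.getElem_append, List.length_ofFn]
  split
  · rfl
  · congr 1; omega

lemma contains_of_segment {z : ℕ → G.E} (hz : G.InfPath z) (l : List G.E) {M p k : ℕ}
    (hp : 1 ≤ p) (hk : M + p ≤ k) (hper : z (M + p) = z M) :
    G.ContainsCycle (l ++ List.ofFn (fun i : Fin k => z i)) := by
  refine ⟨l ++ List.ofFn (fun i : Fin M => z i),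
    List.ofFn (fun i : Fin p => z (M + i)),
    List.ofFn (fun i : Fin (k - M - p) => z (M + p + i)), ?_, segment_isCycle hz hp hper⟩
  rw [List.append_assoc, List.append_assoc]
  congr 1
  apply List.ext_getElem (by simp; omega)
  intro i h1 h2
  simp only [List.getElem_ofFn, List.getElem_append, List.length_ofFn]
  split_ifs <;> first | rfl | (congr 1; omega)

lemma take_of_prepend_eq {α γ : List G.E} {z z' : ℕ → G.E}
    (h : G.prepend α z = G.prepend γ z') (hc : γ.length ≤ α.length) :
    γ = α.take γ.length := by
  apply List.ext_getElem (by simp; omega)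
  intro i h1 h2
  have := congrFun h i
  rw [prepend_lt α z (by omega), prepend_lt γ z' h1] at this
  simp [List.getElem_take]
  exact this.symm

lemma append_of_prepend_eq {α γ : List G.E} {z z' : ℕ → G.E}
    (h : G.prepend α z = G.prepend γ z') (hc : α.length ≤ γ.length) :
    γ = α ++ List.ofFn (fun i : Fin (γ.length - α.length) => z i) := by
  apply List.ext_getElem (by simp; omega)
  intro i h1 h2
  have := congrFun h i
  rw [prepend_lt γ z' h1] at this
  rw [← this]
  unfold prepend
  simp only [List.getElem_append, List.length_ofFn]
  split_ifs with hi <;> simp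

lemma tail_of_prepend_eq {α γ : List G.E} {z z' : ℕ → G.E}
    (h : G.prepend α z = G.prepend γ z') (hc : α.length ≤ γ.length) (m : ℕ) :
    z' m = z (m + (γ.length - α.length)) := by
  have h1 := prepend_add γ z' m
  have h2 := prepend_add α z (m + (γ.length - α.length))
  rw [show m + (γ.length - α.length) + α.length = m + γ.length from by omega] at h2
  rw [← h1, ← h, h2]

lemma tail_rev_of_prepend_eq {α γ : List G.E} {z z' : ℕ → G.E}
    (h : G.prepend α z = G.prepend γ z') (hc : γ.length ≤ α.length) (n : ℕ) :
    z n = z' (n + (α.length - γ.length)) := by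
  have h1 := prepend_add γ z' (n + (α.length - γ.length))
  rw [show n + (α.length - γ.length) + γ.length = n + α.length from by omega] at h1
  have h2 := prepend_add α z n
  rw [← h2, h, h1]

lemma periodic_mem {z : ℕ → G.E} {p : ℕ} (hp : 1 ≤ p) (hper : ∀ n, z (n + p) = z n)
    (m : ℕ) : z m ∈ List.ofFn (fun i : Fin p => z i) := by
  have hmod : ∀ n, z n = z (n % p) := by
    intro n
    induction n using Nat.strong_induction_on with
    | _ n ih =>
      by_cases h : n < p
      · rw [Nat.mod_eq_of_lt h]
      · have h1 : z n = z (n - p) := by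
          have := hper (n - p)
          rwa [show n - p + p = n from by omega] at this
        rw [h1, ih (n - p) (by omega)]
        congr 1
        exact (Nat.mod_eq_sub_mod (by omega)).symm
  rw [List.mem_ofFn]
  exact ⟨⟨m % p, Nat.mod_lt _ (by omega)⟩, (hmod m).symm⟩

lemma periodic_unique (hnc : G.NoCycleHasEntrance) {z zb : ℕ → G.E}
    (hz : G.InfPath z) (hzb : G.InfPath zb) (hru : G.r (zb 0) = G.r (z 0))
    (hpp : ∃ p, 1 ≤ p ∧ ∀ n, z (n + p) = z n) : zb = z := by
  obtain ⟨p, hp, hper⟩ := hpp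
  have hpath : G.IsPath (G.r (z 0)) (List.ofFn (fun i : Fin p => z i)) (G.r (z 0)) := by
    have h0 := infPath_segment hz p 0
    simp only [Nat.zero_add] at h0
    have hzp : z p = z 0 := by simpa using hper 0
    rwa [hzp] at h0
  have hcyc : G.IsCycle (List.ofFn (fun i : Fin p => z i)) :=
    ⟨by simp [List.ofFn_eq_nil_iff]; omega, ⟨_, hpath⟩⟩
  have H := hnc _ _ hcyc hpath
  funext n
  induction n with
  | zero =>
    exact H (z 0) (periodic_mem hp hper 0) (zb 0) hru
  | succ n ih =>
    have hmem := periodic_mem hp hper (n + 1)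
    have : G.r (zb (n + 1)) = G.r (z (n + 1)) := by
      rw [← hz n, ← hzb n, ih]
    exact H (z (n + 1)) hmem (zb (n + 1)) this

lemma core_contra {α β γ δ : List G.E} {z : ℕ → G.E} {k1 k2 : ℕ} (hz : G.InfPath z)
    (hγ : γ = α ++ List.ofFn (fun i : Fin k1 => z i))
    (hδ : δ = β ++ List.ofFn (fun i : Fin k2 => z i))
    (hrel : ∀ m, z (m + k1) = z (m + k2))
    (hmin : G.Minimal γ δ) (hcf1 : ¬G.ContainsCycle γ) (hcf2 : ¬G.ContainsCycle δ)
    (hne : k1 ≠ 0 ∨ k2 ≠ 0) : False := by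
  rcases lt_trichotomy k1 k2 with h | h | h
  · apply hcf2
    rw [hδ]
    have hper : z (k1 + (k2 - k1)) = z k1 := by
      have h0 := hrel 0
      simp only [Nat.zero_add] at h0
      rw [show k1 + (k2 - k1) = k2 from by omega]
      exact h0.symm
    exact contains_of_segment hz β (by omega) (by omega) hper
  · subst h
    have h1 := hmin α β _ hγ hδ
    have h2 : k1 = 0 := by simpa [List.ofFn_eq_nil_iff] using h1
    omega
  · apply hcf1
    rw [hγ]
    have hper : z (k2 + (k1 - k2)) = z k2 := by
      have h0 := hrel 0
      simp only [Nat.zero_add] at h0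
      rw [show k2 + (k1 - k2) = k1 from by omega]
      exact h0
    exact contains_of_segment hz α (by omega) (by omega) hper

lemma gammaSet_finite (hnc : G.NoCycleHasEntrance) (α : List G.E) (u : G.V) :
    {γ : List G.E | ∃ k, 1 ≤ k ∧ ∃ z, G.InfPath z ∧ G.r (z 0) = u ∧
      (∃ p, 1 ≤ p ∧ ∀ n, z (n + p) = z n) ∧
      γ = α ++ List.ofFn (fun i : Fin k => z i) ∧ ¬G.ContainsCycle γ}.Finite := by
  set S := {γ : List G.E | ∃ k, 1 ≤ k ∧ ∃ z, G.InfPath z ∧ G.r (z 0) = u ∧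
      (∃ p, 1 ≤ p ∧ ∀ n, z (n + p) = z n) ∧
      γ = α ++ List.ofFn (fun i : Fin k => z i) ∧ ¬G.ContainsCycle γ} with hS
  rcases S.eq_empty_or_nonempty with he | ⟨γ0, hγ0⟩
  · rw [he]; exact Set.finite_empty
  · obtain ⟨k0, hk0, z0, hz0, hu0, ⟨p, hp, hper⟩, _, _⟩ := hγ0
    apply Set.Finite.subset
      ((Set.finite_Iio p).image (fun k => α ++ List.ofFn fun i : Fin k => z0 i))
    rintro γ ⟨k, hk, z, hz, hu, hpp, hγeq, hcf⟩
    have hzz : z = z0 := periodic_unique hnc hz0 hz (by rw [hu, hu0]) ⟨p, hp, hper⟩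
    rw [hzz] at hγeq
    refine ⟨k, ?_, hγeq.symm⟩
    simp only [Set.mem_Iio]
    by_contra hkp
    push_neg at hkp
    apply hcf
    rw [hγeq]
    have hper0 : z0 (0 + p) = z0 0 := by simpa using hper 0
    exact contains_of_segment hz0 α hp (by omega) hper0


end DirGraph

open DirGraph

/-- If no cycle of `E` has an entrance and `(α,β)` is a minimal
cycle-free ancestry pair, then only finitely many minimal cycle-free ancestry
pairs `(γ,δ)` satisfy `(αz, βz) = (γw, δw)` for some infinite paths `z, w`. -/
theorem finitely_many_overlapping_pairs (G : DirGraph)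
    (hnc : G.NoCycleHasEntrance) (v w u : G.V) (α β : List G.E)
    (hα : G.IsPath v α u) (hβ : G.IsPath w β u) (hm : G.Minimal α β)
    (hcf : ¬G.ContainsCycle α ∧ ¬G.ContainsCycle β) :
    {p : List G.E × List G.E |
      ∃ v' w' u' : G.V, G.IsPath v' p.1 u' ∧ G.IsPath w' p.2 u' ∧
        G.Minimal p.1 p.2 ∧ ¬G.ContainsCycle p.1 ∧ ¬G.ContainsCycle p.2 ∧
        ∃ z z' : ℕ → G.E, G.InfPath z ∧ G.InfPath z' ∧
          G.r (z 0) = u ∧ G.r (z' 0) = u' ∧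
          G.prepend α z = G.prepend p.1 z' ∧
          G.prepend β z = G.prepend p.2 z'}.Finite := by
  classical
  set Γα := {γ : List G.E | ∃ k, 1 ≤ k ∧ ∃ z, G.InfPath z ∧ G.r (z 0) = u ∧
      (∃ p, 1 ≤ p ∧ ∀ n, z (n + p) = z n) ∧
      γ = α ++ List.ofFn (fun i : Fin k => z i) ∧ ¬G.ContainsCycle γ} with hΓα
  set Γβ := {δ : List G.E | ∃ k, 1 ≤ k ∧ ∃ z, G.InfPath z ∧ G.r (z 0) = u ∧
      (∃ p, 1 ≤ p ∧ ∀ n, z (n + p) = z n) ∧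
      δ = β ++ List.ofFn (fun i : Fin k => z i) ∧ ¬G.ContainsCycle δ} with hΓβ
  have hA : (((fun n => α.take n) '' Set.Iic α.length) ∪ Γα).Finite :=
    Set.Finite.union ((Set.finite_Iic _).image _) (gammaSet_finite hnc α u)
  have hB : (((fun n => β.take n) '' Set.Iic β.length) ∪ Γβ).Finite :=
    Set.Finite.union ((Set.finite_Iic _).image _) (gammaSet_finite hnc β u)
  apply Set.Finite.subset (Set.Finite.prod hA hB)
  rintro ⟨γ, δ⟩ ⟨v', w', u', hγp, hδp, hminp, hcf1, hcf2, z, z', hz, hz', hz0, hz'0, hE1, hE2⟩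
  replace hE1 : G.prepend α z = G.prepend γ z' := hE1
  replace hE2 : G.prepend β z = G.prepend δ z' := hE2
  replace hminp : G.Minimal γ δ := hminp
  replace hcf1 : ¬G.ContainsCycle γ := hcf1
  replace hcf2 : ¬G.ContainsCycle δ := hcf2
  have hcontra : α.length < γ.length → β.length < δ.length → False := by
    intro hca hdb
    have hγeq := append_of_prepend_eq hE1 hca.le
    have hδeq := append_of_prepend_eq hE2 hdb.le
    have hzt1 := tail_of_prepend_eq hE1 hca.le
    have hzt2 := tail_of_prepend_eq hE2 hdb.le
    exact core_contra hz hγeq hδeq (fun m => by rw [← hzt1 m, hzt2 m]) hminp hcf1 hcf2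
      (Or.inl (by omega))
  have hcontra2 : α.length ≤ γ.length → β.length ≤ δ.length →
      (α.length < γ.length ∨ β.length < δ.length) → False := by
    intro hca hdb hor
    have hγeq := append_of_prepend_eq hE1 hca
    have hδeq := append_of_prepend_eq hE2 hdb
    have hzt1 := tail_of_prepend_eq hE1 hca
    have hzt2 := tail_of_prepend_eq hE2 hdb
    refine core_contra hz hγeq hδeq (fun m => by rw [← hzt1 m, hzt2 m]) hminp hcf1 hcf2 ?_
    rcases hor with h | h
    · exact Or.inl (by omega)
    · exact Or.inr (by omega)
  constructor
  · -- γ component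
    by_cases hca : γ.length ≤ α.length
    · exact Or.inl ⟨γ.length, hca, (take_of_prepend_eq hE1 hca).symm⟩
    · push_neg at hca
      by_cases hdb : β.length ≤ δ.length
      · exact absurd (hcontra2 hca.le hdb (Or.inl hca)) (not_false)
      · push_neg at hdb
        have hγeq := append_of_prepend_eq hE1 hca.le
        have hzt1 := tail_of_prepend_eq hE1 hca.le
        refine Or.inr ⟨γ.length - α.length, by omega, z, hz, hz0, ?_, hγeq, hcf1⟩
        refine ⟨(β.length - δ.length) + (γ.length - α.length), by omega, fun n => ?_⟩
        have h1 := tail_rev_of_prepend_eq hE2 hdb.le n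
        rw [hzt1 (n + (β.length - δ.length))] at h1
        rw [show n + ((β.length - δ.length) + (γ.length - α.length)) =
          n + (β.length - δ.length) + (γ.length - α.length) from by omega]
        exact h1.symm
  · -- δ component
    by_cases hdb : δ.length ≤ β.length
    · exact Or.inl ⟨δ.length, hdb, (take_of_prepend_eq hE2 hdb).symm⟩
    · push_neg at hdb
      by_cases hca : α.length ≤ γ.length
      · exact absurd (hcontra2 hca hdb.le (Or.inr hdb)) (not_false)
      · push_neg at hca
        have hδeq := append_of_prepend_eq hE2 hdb.le
        have hzt2 := tail_of_prepend_eq hE2 hdb.le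
        refine Or.inr ⟨δ.length - β.length, by omega, z, hz, hz0, ?_, hδeq, hcf2⟩
        refine ⟨(α.length - γ.length) + (δ.length - β.length), by omega, fun n => ?_⟩
        have h1 := tail_rev_of_prepend_eq hE1 hca.le n
        rw [hzt2 (n + (α.length - γ.length))] at h1
        rw [show n + ((α.length - γ.length) + (δ.length - β.length)) =
          n + (α.length - γ.length) + (δ.length - β.length) from by omega]
        exact h1.symm
end

section
/- Let E be a directed graph and let (λ,μ) be an ancestry pair. Then there is a unique minimal ancestry pair (α,β) such that (λ,μ) = (αε, βε) for some finite path ε. Moreover, if (λ,μ) is cycle-free, then so is (α,β). -/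
private lemma exists_min (G : DirGraph) :
    ∀ N (l m : List G.E), l.length ≤ N →
      ∃ a b ε : List G.E, G.Minimal a b ∧ l = a ++ ε ∧ m = b ++ ε := by
  intro N
  induction N with
  | zero =>
    intro l m hl
    have : l = [] := List.eq_nil_of_length_eq_zero (Nat.le_zero.mp hl)
    subst this
    exact ⟨[], m, [], fun a' b' n h1 _ => (List.append_eq_nil_iff.mp h1.symm).2,
      rfl, (List.append_nil m).symm⟩
  | succ N ih =>
    intro l m hl
    by_cases hmin : G.Minimal l m
    · exact ⟨l, m, [], hmin, (List.append_nil l).symm, (List.append_nil m).symm⟩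
    · simp only [DirGraph.Minimal, not_forall] at hmin
      obtain ⟨a', b', n, h1, h2, hn⟩ := hmin
      have hnlen : 1 ≤ n.length := List.length_pos_iff.mpr hn
      have : a'.length ≤ N := by
        have := hl
        rw [h1, List.length_append] at this
        omega
      obtain ⟨a, b, ε, hmin, ha, hb⟩ := ih a' b' this
      exact ⟨a, b, ε ++ n, hmin, by rw [h1, ha, List.append_assoc],
        by rw [h2, hb, List.append_assoc]⟩

private lemma min_unique (G : DirGraph) {l m a b a' b' ε ε' : List G.E}
    (h : G.Minimal a b) (h' : G.Minimal a' b')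
    (hla : l = a ++ ε) (hmb : m = b ++ ε)
    (hla' : l = a' ++ ε') (hmb' : m = b' ++ ε') : a = a' ∧ b = b' := by
  have hsuf : ε <:+ ε' ∨ ε' <:+ ε :=
    List.suffix_or_suffix_of_suffix (⟨a, hla.symm⟩ : ε <:+ l) ⟨a', hla'.symm⟩
  rcases hsuf with ⟨d, hd⟩ | ⟨d, hd⟩
  · -- ε' = d ++ ε
    have ha : a = a' ++ d := by
      have : a ++ ε = (a' ++ d) ++ ε := by
        rw [List.append_assoc, hd, ← hla', hla]
      exact List.append_cancel_right this
    have hb : b = b' ++ d := by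
      have : b ++ ε = (b' ++ d) ++ ε := by
        rw [List.append_assoc, hd, ← hmb', hmb]
      exact List.append_cancel_right this
    have hd0 : d = [] := h a' b' d ha hb
    subst hd0
    simp only [List.append_nil] at ha hb
    exact ⟨ha, hb⟩
  · -- ε = d ++ ε'
    have ha : a' = a ++ d := by
      have : a' ++ ε' = (a ++ d) ++ ε' := by
        rw [List.append_assoc, hd, ← hla, hla']
      exact List.append_cancel_right this
    have hb : b' = b ++ d := by
      have : b' ++ ε' = (b ++ d) ++ ε' := by
        rw [List.append_assoc, hd, ← hmb, hmb']
      exact List.append_cancel_right this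
    have hd0 : d = [] := h' a b d ha hb
    subst hd0
    simp only [List.append_nil] at ha hb
    exact ⟨ha.symm, hb.symm⟩

theorem unique_minimal_factorization (G : DirGraph) (v w u : G.V)
    (l m : List G.E) (hl : G.IsPath v l u) (hm : G.IsPath w m u) :
    (∃! p : List G.E × List G.E,
      G.Minimal p.1 p.2 ∧ ∃ ε : List G.E, l = p.1 ++ ε ∧ m = p.2 ++ ε) ∧
    ((¬G.ContainsCycle l ∧ ¬G.ContainsCycle m) →
      ∀ p : List G.E × List G.E,
        (G.Minimal p.1 p.2 ∧ ∃ ε : List G.E, l = p.1 ++ ε ∧ m = p.2 ++ ε) →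
        ¬G.ContainsCycle p.1 ∧ ¬G.ContainsCycle p.2) := by
  constructor
  · obtain ⟨a, b, ε, hmin, ha, hb⟩ := exists_min G l.length l m le_rfl
    refine ⟨(a, b), ⟨hmin, ε, ha, hb⟩, ?_⟩
    rintro ⟨a', b'⟩ ⟨hmin', ε', ha', hb'⟩
    obtain ⟨e1, e2⟩ := min_unique G hmin' hmin ha' hb' ha hb
    exact Prod.ext e1 e2
  · rintro ⟨hcl, hcm⟩ ⟨a, b⟩ ⟨hmin, ε, ha, hb⟩
    constructor
    · rintro ⟨p, c, q, hpc, hc⟩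
      exact hcl ⟨p, c, q ++ ε, by rw [ha, hpc]; simp [List.append_assoc], hc⟩
    · rintro ⟨p, c, q, hpc, hc⟩
      exact hcm ⟨p, c, q ++ ε, by rw [hb, hpc]; simp [List.append_assoc], hc⟩
end

section
/- Let E be a directed graph in which no cycle has an entrance, and let v be a vertex lying on a cycle λ. Then there is exactly one infinite path with range v, namely the path obtained by repeating λ forever (starting at the appropriate position). -/
namespace DirGraph

variable (G : DirGraph)

variable {G : DirGraph}

theorem IsPath.r_getElem_zero {v u : G.V} {l : List G.E} (h : G.IsPath v l u)
    (hl : 0 < l.length) : G.r l[0] = v := by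
  cases h with
  | nil => simp at hl
  | cons => rfl

theorem IsPath.eq_of_nil {v u : G.V} (h : G.IsPath v [] u) : v = u := by
  cases h
  rfl

theorem IsPath.s_getElem {v u : G.V} {l : List G.E} (h : G.IsPath v l u) (i : ℕ)
    (hi : i < l.length) : G.s l[i] = if h : i + 1 < l.length then G.r l[i + 1] else u := by
  induction h generalizing i with
  | nil => simp at hi
  | @cons e l' _ hp ih =>
    cases i with
    | zero =>
      split_ifs with hlt
      · exact (hp.r_getElem_zero (by simpa using hlt)).symm
      · obtain rfl : l' = [] := by simpa using hlt
        exact hp.eq_of_nil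
    | succ j => simpa using ih j (by simpa using hi)

theorem IsPath.s_get_eq_r_get_succ_mod {u : G.V} {l : List G.E} (h : G.IsPath u l u)
    (i : Fin l.length) :
    G.s (l.get i) = G.r (l.get ⟨(i + 1) % l.length, Nat.mod_lt _ i.pos⟩) := by
  simp only [List.get_eq_getElem]
  rw [h.s_getElem i i.isLt]
  split_ifs with hlt
  · simp only [Nat.mod_eq_of_lt hlt]
  · have hlen : (i : ℕ) + 1 = l.length := by omega
    simp only [hlen, Nat.mod_self]
    exact (h.r_getElem_zero i.pos).symm

theorem IsPath.infPath_rotate {u : G.V} {l : List G.E} (h : G.IsPath u l u)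
    (hl : 0 < l.length) (k : ℕ) :
    G.InfPath (fun i => l.get ⟨(k + i) % l.length, Nat.mod_lt _ hl⟩) := by
  intro i
  rw [h.s_get_eq_r_get_succ_mod]
  simp only [Nat.mod_add_mod, Nat.add_assoc]

theorem InfPath.eq_of_r_zero_eq {x y : ℕ → G.E} (hx : G.InfPath x) (hy : G.InfPath y)
    (hunique : ∀ i e, G.r e = G.r (y i) → e = y i) (h0 : G.r (x 0) = G.r (y 0)) : x = y := by
  funext i
  induction i with
  | zero => exact hunique 0 _ h0
  | succ j ih => exact hunique (j + 1) _ (by rw [← hx j, ih, hy j])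

end DirGraph

/-- If no cycle of `E` has an entrance and `v` lies on a cycle `c`
(as the range of its `k`-th edge), then the unique infinite path with range `v`
is the one obtained by repeating the cycle forever from position `k`. -/
theorem unique_infinite_path_on_cycle (G : DirGraph)
    (hnc : G.NoCycleHasEntrance) (c : List G.E) (u : G.V)
    (hc : c ≠ []) (hcy : G.IsPath u c u) (k : ℕ) (hk : k < c.length) :
    (G.InfPath (fun i => c.get ⟨(k + i) % c.length, Nat.mod_lt _ (List.length_pos_of_ne_nil hc)⟩) ∧
      G.r ((fun i => c.get ⟨(k + i) % c.length, Nat.mod_lt _ (List.length_pos_of_ne_nil hc)⟩) 0) =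
        G.r (c.get ⟨k, hk⟩)) ∧
    ∀ y : ℕ → G.E, G.InfPath y → G.r (y 0) = G.r (c.get ⟨k, hk⟩) →
      y = fun i => c.get ⟨(k + i) % c.length, Nat.mod_lt _ (List.length_pos_of_ne_nil hc)⟩ := by
  have hrot := hcy.infPath_rotate (List.length_pos_of_ne_nil hc) k
  have hstart : G.r (c.get ⟨(k + 0) % c.length, Nat.mod_lt _ (List.length_pos_of_ne_nil hc)⟩) =
      G.r (c.get ⟨k, hk⟩) := by
    simp only [Nat.add_zero, Nat.mod_eq_of_lt hk]
  refine ⟨⟨hrot, hstart⟩, fun y hy hy0 => ?_⟩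
  refine hy.eq_of_r_zero_eq hrot (fun i e he => ?_) (hy0.trans hstart.symm)
  exact hnc u c ⟨hc, u, hcy⟩ hcy _ (List.get_mem _ _) e he
end

section
/- Let E be a row-finite directed graph with no sources in which no cycle has an entrance, and let (α,β) be an ancestry pair such that α or β contains a cycle. Then there is a cycle-free minimal ancestry pair (λ,μ) such that {(αx, βx) : x infinite, r(x)=s(α)} ⊆ {(λy, μy) : y infinite, r(y)=s(λ)} as subsets of E^∞ × E^∞. -/
/-- The image `π_R(Z(a,b))` in `E^∞ × E^∞` of the cylinder set of an ancestry
pair `(a,b)` for the vertices `v, w`. -/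
def DirGraph.PairSet (G : DirGraph) (v w : G.V) (a b : List G.E) :
    Set ((ℕ → G.E) × (ℕ → G.E)) :=
  {t | ∃ (u : G.V) (z : ℕ → G.E), G.InfPath z ∧ G.r (z 0) = u ∧
    G.IsPath v a u ∧ G.IsPath w b u ∧ t = (G.prepend a z, G.prepend b z)}

/-
Among the ancestry pairs `(λ, μ)` whose pair set contains that of `(α, β)`, pick one of minimal
total length. It is minimal, since cancelling a common final segment `ν` only enlarges the pair set
(replace `y` by `ν y`). It is cycle-free: if `λ = p c q` with `c` a cycle based at `b`, then `c` has
no entrance, so `c` repeated forever is the only infinite path with range `b`; hence `c q y = q y`,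
and `(p q, μ)` would be a shorter pair with the same property.
-/

namespace DirGraph

variable {G : DirGraph}

namespace IsPath

theorem range_eq_of_cons {v u : G.V} {e : G.E} {l : List G.E} (h : G.IsPath v (e :: l) u) :
    v = G.r e := by
  cases h; rfl

theorem tail {v u : G.V} {e : G.E} {l : List G.E} (h : G.IsPath v (e :: l) u) :
    G.IsPath (G.s e) l u := by
  cases h; assumption

theorem source_unique {v u u' : G.V} {l : List G.E} (h : G.IsPath v l u)
    (h' : G.IsPath v l u') : u = u' := by
  induction l generalizing v with
  | nil => cases h; cases h'; rfl
  | cons e l ih => exact ih h.tail h'.tail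

theorem range_unique {v v' u u' : G.V} {l : List G.E} (h : G.IsPath v l u)
    (h' : G.IsPath v' l u') (hl : l ≠ []) : v = v' := by
  cases l with
  | nil => exact absurd rfl hl
  | cons e l => rw [h.range_eq_of_cons, h'.range_eq_of_cons]

theorem append {v t u : G.V} {a b : List G.E} (ha : G.IsPath v a t) (hb : G.IsPath t b u) :
    G.IsPath v (a ++ b) u := by
  induction ha with
  | nil => exact hb
  | cons e _ ih => exact .cons e (ih hb)

end IsPath

theorem isPath_append {v u : G.V} {a b : List G.E} :
    G.IsPath v (a ++ b) u ↔ ∃ t, G.IsPath v a t ∧ G.IsPath t b u := by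
  refine ⟨fun h => ?_, fun ⟨t, ha, hb⟩ => ha.append hb⟩
  induction a generalizing v with
  | nil => exact ⟨v, .nil v, h⟩
  | cons e a ih =>
    cases h with
    | cons _ h =>
      obtain ⟨t, ha, hb⟩ := ih h
      exact ⟨t, .cons e ha, hb⟩

theorem IsPath.exists_of_append_of_append {v w u : G.V} {a b s : List G.E}
    (ha : G.IsPath v (a ++ s) u) (hb : G.IsPath w (b ++ s) u) (hs : s ≠ []) :
    ∃ t, G.IsPath v a t ∧ G.IsPath w b t ∧ G.IsPath t s u := by
  obtain ⟨t, ha, hsa⟩ := isPath_append.mp ha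
  obtain ⟨t', hb, hsb⟩ := isPath_append.mp hb
  obtain rfl := hsa.range_unique hsb hs
  exact ⟨t, ha, hb, hsa⟩

theorem IsPath.exists_of_append_cycle {v u : G.V} {p c q : List G.E}
    (h : G.IsPath v (p ++ c ++ q) u) (hc : G.IsCycle c) :
    ∃ b, G.IsPath v p b ∧ G.IsPath b c b ∧ G.IsPath b q u := by
  obtain ⟨hne, b, hb⟩ := hc
  obtain ⟨t, hpc, hq⟩ := isPath_append.mp h
  obtain ⟨t', hp, hc⟩ := isPath_append.mp hpc
  obtain rfl := hc.range_unique hb hne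
  obtain rfl := hc.source_unique hb
  exact ⟨_, hp, hb, hq⟩

theorem IsPath.remove_cycle {v u : G.V} {p c q : List G.E}
    (h : G.IsPath v (p ++ c ++ q) u) (hc : G.IsCycle c) : G.IsPath v (p ++ q) u :=
  let ⟨_, hp, _, hq⟩ := h.exists_of_append_cycle hc
  hp.append hq

theorem exists_mem_range_eq_source {b : G.V} {c : List G.E} (hc : G.IsPath b c b)
    {f : G.E} (hf : f ∈ c) : ∃ f' ∈ c, G.r f' = G.s f := by
  obtain ⟨l₁, l₂, rfl⟩ := List.append_of_mem hf
  obtain ⟨t, _, hfl⟩ := isPath_append.mp hc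
  cases l₂ with
  | nil =>
    -- `f` is the last edge, so `s f = b` is the range of the first edge
    obtain rfl := hfl.tail.source_unique (.nil _)
    cases l₁ with
    | nil => exact ⟨f, by simp, (hc.range_eq_of_cons).symm⟩
    | cons g l₁ => exact ⟨g, by simp, (hc.range_eq_of_cons).symm⟩
  | cons e l₂ => exact ⟨e, by simp, (hfl.tail.range_eq_of_cons).symm⟩

theorem InfPath.eq_of_unique_entry {C : Set G.E}
    (hclosed : ∀ f ∈ C, ∃ f' ∈ C, G.r f' = G.s f)
    (hentry : ∀ f ∈ C, ∀ e, G.r e = G.r f → e = f)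
    {x y : ℕ → G.E} (hx : G.InfPath x) (hy : G.InfPath y) (hx0 : x 0 ∈ C)
    (h0 : G.r (y 0) = G.r (x 0)) : x = y := by
  have key : ∀ i, x i ∈ C ∧ y i = x i := by
    intro i
    induction i with
    | zero => exact ⟨hx0, hentry _ hx0 _ h0⟩
    | succ i ih =>
      obtain ⟨f, hfC, hf⟩ := hclosed _ ih.1
      have hxf : x (i + 1) = f := hentry f hfC _ (by rw [← hx i, hf])
      have hyf : y (i + 1) = f := hentry f hfC _ (by rw [← hy i, ih.2, hf])
      exact ⟨hxf ▸ hfC, hyf.trans hxf.symm⟩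
  funext i
  exact (key i).2.symm

theorem prepend_nil (x : ℕ → G.E) : G.prepend [] x = x := by
  funext i; simp [prepend]

theorem prepend_cons_zero (e : G.E) (l : List G.E) (x : ℕ → G.E) :
    G.prepend (e :: l) x 0 = e := by
  simp [prepend]

theorem prepend_cons_succ (e : G.E) (l : List G.E) (x : ℕ → G.E) (i : ℕ) :
    G.prepend (e :: l) x (i + 1) = G.prepend l x i := by
  simp [prepend]

theorem prepend_append (a b : List G.E) (x : ℕ → G.E) :
    G.prepend (a ++ b) x = G.prepend a (G.prepend b x) := by
  induction a with
  | nil => rw [List.nil_append, prepend_nil]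
  | cons e a ih =>
    funext i
    cases i with
    | zero => simp only [List.cons_append, prepend_cons_zero]
    | succ i => simp only [List.cons_append, prepend_cons_succ, ih]

theorem IsPath.infPath_prepend {t u : G.V} {l : List G.E} {x : ℕ → G.E}
    (h : G.IsPath t l u) (hx : G.InfPath x) (hx0 : G.r (x 0) = u) :
    G.InfPath (G.prepend l x) ∧ G.r (G.prepend l x 0) = t := by
  induction h with
  | nil => rw [prepend_nil]; exact ⟨hx, hx0⟩
  | cons e h ih =>
    obtain ⟨hi, h0⟩ := ih hx0
    refine ⟨fun i => ?_, by rw [prepend_cons_zero]⟩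
    cases i with
    | zero => rw [prepend_cons_zero, prepend_cons_succ, h0]
    | succ i => rw [prepend_cons_succ, prepend_cons_succ]; exact hi i

theorem prepend_cycle (hnc : G.NoCycleHasEntrance) {b : G.V} {c : List G.E}
    (hne : c ≠ []) (hc : G.IsPath b c b) {x : ℕ → G.E} (hx : G.InfPath x)
    (hx0 : G.r (x 0) = b) : G.prepend c x = x := by
  obtain ⟨hcx, hcx0⟩ := hc.infPath_prepend hx hx0
  obtain ⟨e, l, rfl⟩ := List.exists_cons_of_ne_nil hne
  refine InfPath.eq_of_unique_entry (C := {f | f ∈ e :: l})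
    (fun f hf => exists_mem_range_eq_source hc hf) (hnc b _ ⟨hne, b, hc⟩ hc) hcx hx ?_
    (hx0.trans hcx0.symm)
  rw [prepend_cons_zero]
  exact List.mem_cons_self

theorem prepend_remove_cycle (hnc : G.NoCycleHasEntrance) {v u : G.V} {p c q : List G.E}
    (h : G.IsPath v (p ++ c ++ q) u) (hc : G.IsCycle c) {x : ℕ → G.E} (hx : G.InfPath x)
    (hx0 : G.r (x 0) = u) : G.prepend (p ++ c ++ q) x = G.prepend (p ++ q) x := by
  obtain ⟨b, -, hb, hq⟩ := h.exists_of_append_cycle hc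
  obtain ⟨hqx, hqx0⟩ := hq.infPath_prepend hx hx0
  rw [prepend_append, prepend_append, prepend_append, prepend_cycle hnc hc.1 hb hqx hqx0]

theorem mem_pairSet_swap {v w : G.V} {a b : List G.E} {t : (ℕ → G.E) × (ℕ → G.E)} :
    t.swap ∈ G.PairSet w v b a ↔ t ∈ G.PairSet v w a b := by
  constructor <;> rintro ⟨u, z, hz, hz0, h1, h2, h⟩ <;>
    exact ⟨u, z, hz, hz0, h2, h1, by simpa [Prod.swap_eq_iff_eq_swap] using h⟩

theorem pairSet_append_subset {v w : G.V} {a b s : List G.E} (hs : s ≠ []) :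
    G.PairSet v w (a ++ s) (b ++ s) ⊆ G.PairSet v w a b := by
  rintro _ ⟨u, z, hz, hz0, ha, hb, rfl⟩
  obtain ⟨t, ha, hb, hst⟩ := ha.exists_of_append_of_append hb hs
  obtain ⟨hsz, hsz0⟩ := hst.infPath_prepend hz hz0
  exact ⟨t, G.prepend s z, hsz, hsz0, ha, hb, by rw [prepend_append, prepend_append]⟩

theorem pairSet_remove_cycle_left (hnc : G.NoCycleHasEntrance) {v w : G.V}
    {p c q m : List G.E} (hc : G.IsCycle c) :
    G.PairSet v w (p ++ c ++ q) m ⊆ G.PairSet v w (p ++ q) m := by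
  rintro _ ⟨u, z, hz, hz0, hl, hm, rfl⟩
  exact ⟨u, z, hz, hz0, hl.remove_cycle hc, hm, by rw [prepend_remove_cycle hnc hl hc hz hz0]⟩

theorem pairSet_remove_cycle_right (hnc : G.NoCycleHasEntrance) {v w : G.V}
    {l p c q : List G.E} (hc : G.IsCycle c) :
    G.PairSet v w l (p ++ c ++ q) ⊆ G.PairSet v w l (p ++ q) := fun _ ht =>
  mem_pairSet_swap.mp (pairSet_remove_cycle_left hnc hc (mem_pairSet_swap.mpr ht))

theorem exists_mcfPair_pairSet_subset (hnc : G.NoCycleHasEntrance) {v w u : G.V}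
    {l m : List G.E} (hl : G.IsPath v l u) (hm : G.IsPath w m u) :
    ∃ l' m', G.MCFPair v w l' m' ∧ G.PairSet v w l m ⊆ G.PairSet v w l' m' := by
  induction hn : l.length + m.length using Nat.strong_induction_on generalizing l m u with
  | _ n ih =>
  have reduce : ∀ l₀ m₀ u₀, G.IsPath v l₀ u₀ → G.IsPath w m₀ u₀ →
      l₀.length + m₀.length < n → G.PairSet v w l m ⊆ G.PairSet v w l₀ m₀ →
      ∃ l' m', G.MCFPair v w l' m' ∧ G.PairSet v w l m ⊆ G.PairSet v w l' m' :=
    fun l₀ m₀ u₀ hl₀ hm₀ hlt hsub =>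
      let ⟨l', m', hmcf, hsub'⟩ := ih _ hlt hl₀ hm₀ rfl
      ⟨l', m', hmcf, hsub.trans hsub'⟩
  by_cases hlc : G.ContainsCycle l
  · obtain ⟨p, c, q, rfl, hc⟩ := hlc
    have := List.length_pos_of_ne_nil hc.1
    exact reduce _ m u (hl.remove_cycle hc) hm (by simp only [List.length_append] at hn ⊢; omega)
      (pairSet_remove_cycle_left hnc hc)
  by_cases hmc : G.ContainsCycle m
  · obtain ⟨p, c, q, rfl, hc⟩ := hmc
    have := List.length_pos_of_ne_nil hc.1
    exact reduce l _ u hl (hm.remove_cycle hc) (by simp only [List.length_append] at hn ⊢; omega)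
      (pairSet_remove_cycle_right hnc hc)
  by_cases hmin : G.Minimal l m
  · exact ⟨l, m, ⟨⟨u, hl, hm⟩, hmin, hlc, hmc⟩, subset_rfl⟩
  obtain ⟨a, b, s, rfl, rfl, hs⟩ : ∃ a b s, l = a ++ s ∧ m = b ++ s ∧ s ≠ [] := by
    simpa [Minimal] using hmin
  obtain ⟨t, ha, hb, -⟩ := hl.exists_of_append_of_append hm hs
  have := List.length_pos_of_ne_nil hs
  exact reduce a b t ha hb (by simp only [List.length_append] at hn ⊢; omega) (pairSet_append_subset hs)

end DirGraph

theorem pairset_contained_in_cycle_free_pairset_general (G : DirGraph)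
    (hnc : G.NoCycleHasEntrance)
    (v w u : G.V) (α β : List G.E)
    (hα : G.IsPath v α u) (hβ : G.IsPath w β u) :
    ∃ (l m : List G.E) (u' : G.V), G.IsPath v l u' ∧ G.IsPath w m u' ∧
      G.Minimal l m ∧ ¬G.ContainsCycle l ∧ ¬G.ContainsCycle m ∧
      G.PairSet v w α β ⊆ G.PairSet v w l m := by
  obtain ⟨l, m, ⟨⟨u', hl, hm⟩, hmin, hlf, hmf⟩, hsub⟩ :=
    DirGraph.exists_mcfPair_pairSet_subset hnc hα hβ
  exact ⟨l, m, u', hl, hm, hmin, hlf, hmf, hsub⟩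

/-- In a row-finite graph with no sources in which no cycle has an
entrance, for any ancestry pair `(α,β)` with `α` or `β` containing a cycle,
there is a cycle-free minimal ancestry pair `(λ,μ)` with
`π_R(Z(α,β)) ⊆ π_R(Z(λ,μ))`. -/
theorem pairset_contained_in_cycle_free_pairset (G : DirGraph)
    (hrf : G.RowFinite) (hns : G.NoSources) (hnc : G.NoCycleHasEntrance)
    (v w u : G.V) (α β : List G.E)
    (hα : G.IsPath v α u) (hβ : G.IsPath w β u)
    (hcyc : G.ContainsCycle α ∨ G.ContainsCycle β) :
    ∃ (l m : List G.E) (u' : G.V), G.IsPath v l u' ∧ G.IsPath w m u' ∧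
      G.Minimal l m ∧ ¬G.ContainsCycle l ∧ ¬G.ContainsCycle m ∧
      G.PairSet v w α β ⊆ G.PairSet v w l m :=
  pairset_contained_in_cycle_free_pairset_general G hnc v w u α β hα hβ
end

section
/- A directed graph E has strong finite ancestry (every pair of vertices has at most finitely many minimal ancestry pairs) if and only if E has finite ancestry (every pair of vertices has finitely many cycle-free minimal ancestry pairs) and E has no cycles. -/
/-!
A cycle `c` at `u` gives the pairwise distinct minimal ancestry pairs `(cⁿ, [])` for `(u, u)`,
so strong finite ancestry excludes cycles. Conversely, in a graph without cycles every minimal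
ancestry pair is cycle-free, so the two finiteness conditions coincide.
-/

namespace DirGraph

variable {G : DirGraph}

theorem IsPath.append_s14 {v u w : G.V} {a b : List G.E} (ha : G.IsPath v a u)
    (hb : G.IsPath u b w) : G.IsPath v (a ++ b) w := by
  induction ha with
  | nil => exact hb
  | cons e _ ih => exact .cons e (ih hb)

theorem IsPath.flatten_replicate {u : G.V} {c : List G.E} (hc : G.IsPath u c u) (n : ℕ) :
    G.IsPath u (List.replicate n c).flatten u := by
  induction n with
  | zero => exact .nil u
  | succ k ih => simpa only [List.replicate_succ, List.flatten_cons] using hc.append_s14 ih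

theorem minimal_nil_right (a : List G.E) : G.Minimal a [] :=
  fun _ _ _ _ hb => (List.nil_eq_append_iff.mp hb).2

theorem not_containsCycle_of_forall_not_isCycle (hG : ¬∃ c, G.IsCycle c) (l : List G.E) :
    ¬G.ContainsCycle l :=
  fun ⟨_, c, _, _, hc⟩ => hG ⟨c, hc⟩

variable (G) in
def minimalAncestryPairs (v w : G.V) : Set (List G.E × List G.E) :=
  {p | (∃ u, G.IsPath v p.1 u ∧ G.IsPath w p.2 u) ∧ G.Minimal p.1 p.2}

theorem setOf_mcfPair_subset (v w : G.V) :
    {p : List G.E × List G.E | G.MCFPair v w p.1 p.2} ⊆ G.minimalAncestryPairs v w :=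
  fun _ hp => ⟨hp.1, hp.2.1⟩

theorem minimalAncestryPairs_subset_setOf_mcfPair (hG : ¬∃ c, G.IsCycle c) (v w : G.V) :
    G.minimalAncestryPairs v w ⊆ {p : List G.E × List G.E | G.MCFPair v w p.1 p.2} :=
  fun p hp => ⟨hp.1, hp.2, not_containsCycle_of_forall_not_isCycle hG p.1,
    not_containsCycle_of_forall_not_isCycle hG p.2⟩

theorem IsCycle.exists_infinite_minimalAncestryPairs {c : List G.E} (hc : G.IsCycle c) :
    ∃ u, (G.minimalAncestryPairs u u).Infinite := by
  obtain ⟨hne, u, hu⟩ := hc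
  refine ⟨u, Set.infinite_of_injective_forall_mem
    (f := fun n => ((List.replicate n c).flatten, ([] : List G.E))) ?_ fun n =>
      ⟨⟨u, hu.flatten_replicate n, .nil u⟩, minimal_nil_right _⟩⟩
  intro m n hmn
  have hlen := congrArg (fun p => p.1.length) hmn
  simp only [List.length_flatten, List.map_replicate, List.sum_replicate, smul_eq_mul] at hlen
  exact Nat.eq_of_mul_eq_mul_right (List.length_pos_iff.mpr hne) hlen

end DirGraph

/-- A directed graph has strong finite ancestry (finitely many
minimal ancestry pairs for each pair of vertices) iff it has finite ancestry
(finitely many cycle-free minimal ancestry pairs for each pair of vertices) and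
has no cycles. -/
theorem strong_finite_ancestry_iff (G : DirGraph) :
    (∀ v w : G.V,
      {p : List G.E × List G.E |
        (∃ u, G.IsPath v p.1 u ∧ G.IsPath w p.2 u) ∧ G.Minimal p.1 p.2}.Finite) ↔
    ((∀ v w : G.V, {p : List G.E × List G.E | G.MCFPair v w p.1 p.2}.Finite) ∧
      ¬∃ c : List G.E, G.IsCycle c) := by
  constructor
  · intro h
    refine ⟨fun v w => (h v w).subset (DirGraph.setOf_mcfPair_subset v w), ?_⟩
    rintro ⟨c, hc⟩
    obtain ⟨u, hu⟩ := hc.exists_infinite_minimalAncestryPairs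
    exact hu (h u u)
  · rintro ⟨hfin, hG⟩ v w
    exact (hfin v w).subset (DirGraph.minimalAncestryPairs_subset_setOf_mcfPair hG v w)
end

section
/- Let E be a directed graph with vertex sequence v_1, v_2, … where each v_{n+1} emits exactly two edges e_n, f_n to v_n (the Bratteli diagram of the CAR algebra). Then E fails to have finite ancestry: for each k ≥ 1, the pair (f_1 e_2 f_3 ⋯ e_{2k}, e_1 f_2 e_3 ⋯ f_{2k}) is a cycle-free minimal ancestry pair for (v_1, v_1), and these pairs are pairwise distinct. -/
/-!
The CAR diagram is graded: an edge into `v n` comes from `v (n + 1)`, so the index of `v` is a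
height function that goes up by one along every edge, and no path can return to its start.
Hence the alternating paths `f₁e₂⋯e₂ₖ` and `e₁f₂⋯f₂ₖ`, which both run from `v₁` down to
`v₂ₖ₊₁`, are cycle-free; they end in the distinct edges `e₂ₖ` and `f₂ₖ`, so they are
minimal; and their lengths `2k` tell them apart.
-/

namespace DirGraph

variable {G : DirGraph}

theorem IsPath.height_eq_add_length {h : G.V → ℕ} {w u : G.V} {l : List G.E}
    (hp : G.IsPath w l u) (hh : ∀ x ∈ l, h (G.s x) = h (G.r x) + 1) :
    h u = h w + l.length := by
  induction hp with
  | nil => rfl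
  | cons x _ ih =>
    rw [ih fun y hy => hh y (List.mem_cons_of_mem x hy), hh x List.mem_cons_self,
      List.length_cons]
    ring

theorem not_isCycle_of_height (h : G.V → ℕ) {c : List G.E}
    (hh : ∀ x ∈ c, h (G.s x) = h (G.r x) + 1) : ¬G.IsCycle c := by
  rintro ⟨hne, u, hp⟩
  have := hp.height_eq_add_length hh
  exact hne (List.length_eq_zero_iff.mp (by omega))

theorem not_containsCycle_of_height (h : G.V → ℕ) {l : List G.E}
    (hh : ∀ x ∈ l, h (G.s x) = h (G.r x) + 1) : ¬G.ContainsCycle l := by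
  rintro ⟨p, c, q, rfl, hc⟩
  exact not_isCycle_of_height h (fun x hx => hh x (by simp [hx])) hc

theorem minimal_of_getLast?_ne {a b : List G.E} (h : a.getLast? ≠ b.getLast?) :
    G.Minimal a b := by
  intro a' b' n ha hb
  by_contra hn
  rw [ha, hb, List.getLast?_append_of_ne_nil _ hn, List.getLast?_append_of_ne_nil _ hn] at h
  exact h rfl

def IsDescendingSeq (v : ℕ → G.V) (g : ℕ → G.E) : Prop :=
  ∀ i, G.r (g i) = v i ∧ G.s (g i) = v (i + 1)

section DescendingSeq

variable {v : ℕ → G.V}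

theorem IsDescendingSeq.ite {x y : ℕ → G.E} (hx : IsDescendingSeq v x)
    (hy : IsDescendingSeq v y) (p : ℕ → Prop) [DecidablePred p] :
    IsDescendingSeq v fun i => if p i then x i else y i := fun i => by
  dsimp only
  split_ifs
  exacts [hx i, hy i]

variable {g : ℕ → G.E}

theorem IsDescendingSeq.isPath_map_range' (hg : IsDescendingSeq v g) (m n : ℕ) :
    G.IsPath (v m) ((List.range' m n).map g) (v (m + n)) := by
  induction n generalizing m with
  | zero => exact .nil _
  | succ n ih =>
    rw [List.range'_succ, List.map_cons, ← (hg m).1, show m + (n + 1) = m + 1 + n by omega]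
    exact .cons _ ((hg m).2 ▸ ih (m + 1))

theorem IsDescendingSeq.isPath_map_range (hg : IsDescendingSeq v g) (n : ℕ) :
    G.IsPath (v 0) ((List.range n).map g) (v n) := by
  simpa [List.range_eq_range'] using hg.isPath_map_range' 0 n

theorem IsDescendingSeq.not_containsCycle_map_range (hv : Function.Injective v)
    (hg : IsDescendingSeq v g) (n : ℕ) : ¬G.ContainsCycle ((List.range n).map g) := by
  refine not_containsCycle_of_height (Function.invFun v) ?_
  simp only [List.mem_map, forall_exists_index, and_imp]
  rintro _ i - rfl
  simp only [(hg i).1, (hg i).2, Function.leftInverse_invFun hv _]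

theorem mcfPair_map_range (hv : Function.Injective v) {g' : ℕ → G.E}
    (hg : IsDescendingSeq v g) (hg' : IsDescendingSeq v g') {n : ℕ} (hn : 0 < n)
    (hlast : g (n - 1) ≠ g' (n - 1)) :
    G.MCFPair (v 0) (v 0) ((List.range n).map g) ((List.range n).map g') := by
  refine ⟨⟨v n, hg.isPath_map_range n, hg'.isPath_map_range n⟩, ?_,
    hg.not_containsCycle_map_range hv n, hg'.not_containsCycle_map_range hv n⟩
  apply minimal_of_getLast?_ne
  simpa [List.getLast?_map, List.getLast?_range, hn.ne'] using hlast

end DescendingSeq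

end DirGraph

theorem CAR_diagram_fails_finite_ancestry_general (G : DirGraph)
    (v : ℕ → G.V) (e f : ℕ → G.E)
    (hv : Function.Injective v)
    (hre : ∀ n, G.r (e n) = v n) (hrf : ∀ n, G.r (f n) = v n)
    (hse : ∀ n, G.s (e n) = v (n + 1)) (hsf : ∀ n, G.s (f n) = v (n + 1))
    (hef : ∀ n, e n ≠ f n) :
    (∀ k : ℕ, 1 ≤ k →
      G.MCFPair (v 0) (v 0)
        ((List.range (2 * k)).map (fun i => if i % 2 = 0 then f i else e i))
        ((List.range (2 * k)).map (fun i => if i % 2 = 0 then e i else f i))) ∧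
    (∀ k k' : ℕ, 1 ≤ k → 1 ≤ k' → k ≠ k' →
      ((List.range (2 * k)).map (fun i => if i % 2 = 0 then f i else e i),
        (List.range (2 * k)).map (fun i => if i % 2 = 0 then e i else f i)) ≠
      ((List.range (2 * k')).map (fun i => if i % 2 = 0 then f i else e i),
        (List.range (2 * k')).map (fun i => if i % 2 = 0 then e i else f i))) ∧
    ¬{p : List G.E × List G.E | G.MCFPair (v 0) (v 0) p.1 p.2}.Finite := by
  have he : G.IsDescendingSeq v e := fun n => ⟨hre n, hse n⟩
  have hf : G.IsDescendingSeq v f := fun n => ⟨hrf n, hsf n⟩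
  set pair : ℕ → List G.E × List G.E := fun k =>
    ((List.range (2 * k)).map (fun i => if i % 2 = 0 then f i else e i),
      (List.range (2 * k)).map (fun i => if i % 2 = 0 then e i else f i))
  have hpair : ∀ k, 1 ≤ k → G.MCFPair (v 0) (v 0) (pair k).1 (pair k).2 := fun k hk =>
    DirGraph.mcfPair_map_range hv (hf.ite he _) (he.ite hf _) (by omega) <| by
      simpa [show (2 * k - 1) % 2 ≠ 0 by omega] using hef (2 * k - 1)
  have hpair_inj : Function.Injective pair := fun k k' h => by
    simpa [pair] using congrArg (fun p => p.1.length) h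
  refine ⟨hpair, fun k k' _ _ hkk' h => hkk' (hpair_inj h), ?_⟩
  exact Set.infinite_of_injective_forall_mem (f := fun k => pair (k + 1))
    (hpair_inj.comp (add_left_injective 1)) fun k => hpair (k + 1) (by omega)

/-- The Bratteli diagram of the CAR algebra (vertices `v n`, with
exactly two edges `e n, f n` from `v (n+1)` to `v n`) fails to have finite
ancestry: for each `k ≥ 1`, the pair `(f₁e₂f₃⋯e₂ₖ, e₁f₂e₃⋯f₂ₖ)` is a cycle-free
minimal ancestry pair for `(v₁, v₁)`, these pairs are pairwise distinct, and
`(v₁, v₁)` has infinitely many cycle-free minimal ancestry pairs. -/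
theorem CAR_diagram_fails_finite_ancestry (G : DirGraph)
    (v : ℕ → G.V) (e f : ℕ → G.E)
    (hv : Function.Injective v)
    (hre : ∀ n, G.r (e n) = v n) (hrf : ∀ n, G.r (f n) = v n)
    (hse : ∀ n, G.s (e n) = v (n + 1)) (hsf : ∀ n, G.s (f n) = v (n + 1))
    (hef : ∀ n, e n ≠ f n)
    (hall : ∀ x : G.E, ∃ n, x = e n ∨ x = f n) :
    (∀ k : ℕ, 1 ≤ k →
      G.MCFPair (v 0) (v 0)
        ((List.range (2 * k)).map (fun i => if i % 2 = 0 then f i else e i))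
        ((List.range (2 * k)).map (fun i => if i % 2 = 0 then e i else f i))) ∧
    (∀ k k' : ℕ, 1 ≤ k → 1 ≤ k' → k ≠ k' →
      ((List.range (2 * k)).map (fun i => if i % 2 = 0 then f i else e i),
        (List.range (2 * k)).map (fun i => if i % 2 = 0 then e i else f i)) ≠
      ((List.range (2 * k')).map (fun i => if i % 2 = 0 then f i else e i),
        (List.range (2 * k')).map (fun i => if i % 2 = 0 then e i else f i))) ∧
    ¬{p : List G.E × List G.E | G.MCFPair (v 0) (v 0) p.1 p.2}.Finite :=
  CAR_diagram_fails_finite_ancestry_general G v e f hv hre hrf hse hsf hef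
end
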